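/- Let n ≥ 2 and let m ≥ 2 be an integer. Let f ∈ L^{m/(m−1)}(ℝ^n) be a continuous nonnegative function with f = f^{*_e} for some direction e ∈ S^{n-1}, and suppose f satisfies f(x) = h(x) · (f ∗ ⋯ ∗ f)(x) for all x ∈ ℝ^n, where the convolution product has m factors (and is finite for every x) and h : ℝ^n → (0,∞) is a continuous strictly positive function. Then the set {x ∈ ℝ^n : f(x) > 0} is connected. -/

import Mathlib

noncomputable section

open MeasureTheory Filter Metric Real Classical
open scoped ENNReal Topology Pointwise RealInnerProductSpace ComplexConjugate

/-- `ℝⁿ` with its Euclidean structure. -/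
abbrev Euc (n : ℕ) : Type := EuclideanSpace ℝ (Fin n)

/-- The open ball centered at the origin with the same volume as `A`. -/
def setRearr {k : ℕ} (A : Set (Euc k)) : Set (Euc k) :=
  ball (0 : Euc k) (((volume A).toReal / (volume (ball (0 : Euc k) 1)).toReal) ^ ((k : ℝ)⁻¹))

/-- The symmetric-decreasing rearrangement `f*(x) = ∫₀^∞ χ_{{|f|>t}*}(x) dt` of `f`. -/
def symmRearr {k : ℕ} {α : Type*} [NormedAddCommGroup α] (f : Euc k → α) : Euc k → ℝ :=
  fun x =>
    (∫⁻ t in Set.Ioi (0 : ℝ), (setRearr {y | t < ‖f y‖}).indicator (fun _ => (1 : ℝ≥0∞)) x).toReal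

/-- Steiner symmetrization in `n-1` codimensions with respect to the first coordinate
direction: symmetric-decreasing rearrangement in the hyperplanes `{x₁} × ℝ^{n-1}`. -/
def steiner1 {m : ℕ} {α : Type*} [NormedAddCommGroup α] (u : Euc (m + 1) → α) :
    Euc (m + 1) → ℝ := fun x =>
  symmRearr (fun y : Euc m => u (show Euc (m + 1) from WithLp.toLp 2 (Fin.cons (x 0) (fun j => y j) : Fin (m + 1) → ℝ)))
    (show Euc m from WithLp.toLp 2 (fun j : Fin m => x j.succ))

/-- Steiner symmetrization in `n-1` codimensions with respect to the direction `e = R⁻¹ e₁`,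
where `R ∈ O(n)` is an orthogonal map sending `e` to the first coordinate vector `e₁`:
`u^{*_e} = R⁻¹ ((R u)^{*₁})`. -/
def steinerE {m : ℕ} {α : Type*} [NormedAddCommGroup α]
    (R : Euc (m + 2) ≃ₗᵢ[ℝ] Euc (m + 2)) (u : Euc (m + 2) → α) : Euc (m + 2) → ℝ :=
  fun x => steiner1 (fun y => u (R.symm y)) (R x)

lemma symm_fixed_pos {κ : ℕ} (g : Euc κ → ℝ) (hg : Continuous g)
    (hid : ∀ y, g y = symmRearr g y) (x : Euc κ) (hx : 0 < g x) :
    ∀ c ∈ Set.Icc (0:ℝ) 1, 0 < g (c • x) := by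
  set L : Euc κ → ℝ≥0∞ := fun y =>
    ∫⁻ t in Set.Ioi (0 : ℝ), (setRearr {z | t < ‖g z‖}).indicator (fun _ => (1 : ℝ≥0∞)) y with hL
  have hgL : ∀ y, g y = (L y).toReal := hid
  have mono : ∀ y z : Euc κ, ‖y‖ ≤ ‖z‖ → L z ≤ L y := by
    intro y z hyz
    refine lintegral_mono fun t => ?_
    by_cases hz : z ∈ setRearr {z | t < ‖g z‖}
    · have hy : y ∈ setRearr {z | t < ‖g z‖} := by
        rw [setRearr, mem_ball_zero_iff] at hz ⊢
        exact lt_of_le_of_lt hyz hz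
      rw [Set.indicator_of_mem hz, Set.indicator_of_mem hy]
    · rw [Set.indicator_of_notMem hz]
      exact zero_le
  have hLx : L x ≠ ⊤ := by
    intro htop
    rw [hgL x, htop, ENNReal.toReal_top] at hx
    exact lt_irrefl 0 hx
  have hnorm : ∀ c : ℝ, 0 ≤ c → c ≤ 1 → ‖c • x‖ ≤ ‖x‖ := by
    intro c h0 h1
    rw [norm_smul, Real.norm_eq_abs, abs_of_nonneg h0]
    calc c * ‖x‖ ≤ 1 * ‖x‖ := by
          exact mul_le_mul_of_nonneg_right h1 (norm_nonneg x)
      _ = ‖x‖ := one_mul _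
  -- if L (c • x) is finite, then g (c•x) ≥ g x
  have key : ∀ c : ℝ, 0 ≤ c → c ≤ 1 → L (c • x) ≠ ⊤ → g x ≤ g (c • x) := by
    intro c h0 h1 hfin
    rw [hgL x, hgL (c • x)]
    exact ENNReal.toReal_mono hfin (mono _ _ (hnorm c h0 h1))
  set A : Set ℝ := {c | c ∈ Set.Icc (0:ℝ) 1 ∧ L (c • x) = ⊤} with hA
  by_cases hAne : A.Nonempty
  · exfalso
    have hbdd : BddAbove A := ⟨1, fun c hc => hc.1.2⟩
    set c' := sSup A with hc'
    obtain ⟨a, ha⟩ := hAne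
    have h0le : 0 ≤ c' := le_trans ha.1.1 (le_csSup hbdd ha)
    have hle1 : c' ≤ 1 := csSup_le ⟨a, ha⟩ fun b hb => hb.1.2
    have right : ∀ c : ℝ, c' < c → c ≤ 1 → g x ≤ g (c • x) := by
      intro c hc hc1
      have h0c : 0 ≤ c := le_trans h0le hc.le
      refine key c h0c hc1 fun htop => ?_
      exact absurd (le_csSup hbdd ⟨⟨h0c, hc1⟩, htop⟩) (not_le.mpr hc)
    have left : ∀ c : ℝ, 0 ≤ c → c < c' → g (c • x) = 0 := by
      intro c h0c hcc
      obtain ⟨b, hb, hcb⟩ := exists_lt_of_lt_csSup ⟨a, ha⟩ hcc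
      have : L (c • x) = ⊤ := by
        refine top_le_iff.mp ?_
        rw [← hb.2]
        refine mono _ _ ?_
        rw [norm_smul, norm_smul, Real.norm_eq_abs, Real.norm_eq_abs,
          abs_of_nonneg h0c, abs_of_nonneg hb.1.1]
        exact mul_le_mul_of_nonneg_right hcb.le (norm_nonneg x)
      rw [hgL, this, ENNReal.toReal_top]
    have hφ : Continuous fun c : ℝ => g (c • x) :=
      hg.comp (continuous_id.smul continuous_const)
    by_cases hc0 : c' = 0
    · -- all of A is {0}; g 0 = 0 but right-limit ≥ g x
      have h0A : (0:ℝ) ∈ A := by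
        have : a ≤ 0 := hc0 ▸ le_csSup hbdd ha
        have : a = 0 := le_antisymm this ha.1.1
        rwa [this] at ha
      have hg0 : g ((0:ℝ) • x) = 0 := by rw [hgL, h0A.2, ENNReal.toReal_top]
      have hge : g x ≤ g ((0:ℝ) • x) := by
        refine ge_of_tendsto (((hφ.tendsto 0).mono_left
          (nhdsWithin_le_nhds : 𝓝[>] (0:ℝ) ≤ 𝓝 0))) ?_
        filter_upwards [Ioo_mem_nhdsGT_of_mem (by constructor <;> norm_num : (0:ℝ) ∈ Set.Ico (0:ℝ) 1)] with c hc
        exact right c (hc0 ▸ hc.1) hc.2.le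
      rw [hg0] at hge
      exact absurd (lt_of_lt_of_le hx hge) (lt_irrefl 0)
    · have hc0' : 0 < c' := lt_of_le_of_ne h0le (Ne.symm hc0)
      have hgc' : g (c' • x) = 0 := by
        have t1 : Tendsto (fun c : ℝ => g (c • x)) (𝓝[<] c') (𝓝 (g (c' • x))) :=
          (hφ.tendsto c').mono_left (nhdsWithin_le_nhds : 𝓝[<] c' ≤ 𝓝 c')
        have t2 : Tendsto (fun c : ℝ => g (c • x)) (𝓝[<] c') (𝓝 0) := by
          refine Tendsto.congr' ?_ tendsto_const_nhds
          filter_upwards [Ioo_mem_nhdsLT_of_mem (⟨hc0', le_refl _⟩ : c' ∈ Set.Ioc 0 c')] with c hc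
          exact (left c hc.1.le hc.2).symm
        exact tendsto_nhds_unique t1 t2
      have hge : g x ≤ g (c' • x) := by
        rcases eq_or_lt_of_le hle1 with h1 | h1
        · rw [h1, one_smul]
        · refine ge_of_tendsto (((hφ.tendsto c').mono_left
            (nhdsWithin_le_nhds : 𝓝[>] c' ≤ 𝓝 c'))) ?_
          filter_upwards [Ioo_mem_nhdsGT_of_mem (⟨le_refl _, h1⟩ : c' ∈ Set.Ico c' 1)] with c hc
          exact right c hc.1 hc.2.le
      rw [hgc'] at hge
      exact absurd (lt_of_lt_of_le hx hge) (lt_irrefl 0)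
  · intro c hc
    have hfin : L (c • x) ≠ ⊤ := fun htop => hAne ⟨c, ⟨hc, htop⟩⟩
    exact lt_of_lt_of_le hx (key c hc.1 hc.2 hfin)


section OneDim
open Set

variable {k : ℕ} {T : Set ℝ}

lemma oneDim_const_step
    (Hc : ∀ t₀ ∈ T, ∀ s : Fin (k+1) → ℝ, (∀ j, s j ∈ T) → t₀ + ∑ j, s j ∈ T)
    {t s' : ℝ} (ht : t ∈ T) (hs : s' ∈ T) : t + (k+1 : ℝ) * s' ∈ T := by
  have := Hc t ht (fun _ => s') (fun _ => hs)
  simpa [Finset.sum_const, nsmul_eq_mul, mul_comm] using this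

lemma oneDim_interval_step
    (Hc : ∀ t₀ ∈ T, ∀ s : Fin (k+1) → ℝ, (∀ j, s j ∈ T) → t₀ + ∑ j, s j ∈ T)
    {c r s η : ℝ} (hr : 0 < r) (hη : 0 < η)
    (hI : Ioo (c - r) (c + r) ⊆ T) (hs : Ioo (s - η) (s + η) ⊆ T) :
    Ioo (c + (k+1:ℝ)*s - (r + (k+1:ℝ)*η)) (c + (k+1:ℝ)*s + (r + (k+1:ℝ)*η)) ⊆ T := by
  intro z hz
  obtain ⟨hz1, hz2⟩ := hz
  set m : ℝ := (k+1 : ℝ) with hm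
  have hm0 : (0:ℝ) < m := by positivity
  set δ : ℝ := z - c - m*s with hδ
  set Rr : ℝ := r + m*η with hRr
  have hRr0 : 0 < Rr := by positivity
  have hδ1 : -Rr < δ := by simp only [hδ, hRr]; linarith
  have hδ2 : δ < Rr := by simp only [hδ, hRr]; linarith
  have habs : |δ| < Rr := abs_lt.mpr ⟨hδ1, hδ2⟩
  set δ₁ : ℝ := δ * r / Rr with hδ₁
  set δ₂ : ℝ := δ * (m*η) / Rr with hδ₂
  have ht₀ : c + δ₁ ∈ T := by
    refine hI ⟨?_, ?_⟩
    · have : |δ₁| < r := by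
        rw [hδ₁, abs_div, abs_of_pos hRr0, div_lt_iff₀ hRr0, abs_mul, abs_of_pos hr]
        calc |δ| * r < Rr * r := by exact mul_lt_mul_of_pos_right habs hr
          _ = r * Rr := mul_comm _ _
      have := abs_lt.mp this
      linarith [this.1]
    · have : |δ₁| < r := by
        rw [hδ₁, abs_div, abs_of_pos hRr0, div_lt_iff₀ hRr0, abs_mul, abs_of_pos hr]
        calc |δ| * r < Rr * r := by exact mul_lt_mul_of_pos_right habs hr
          _ = r * Rr := mul_comm _ _
      have := abs_lt.mp this
      linarith [this.2]
  have hs' : s + δ₂/m ∈ T := by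
    refine hs ⟨?_, ?_⟩ <;>
    · have : |δ₂/m| < η := by
        rw [hδ₂, div_div, abs_div, div_lt_iff₀ (by positivity : (0:ℝ) < |Rr * m|),
          abs_of_pos (by positivity : (0:ℝ) < Rr * m), abs_mul, abs_of_pos (by positivity : (0:ℝ) < m*η)]
        calc |δ| * (m*η) < Rr * (m*η) := mul_lt_mul_of_pos_right habs (by positivity)
          _ = η * (Rr * m) := by ring
      have h2 := abs_lt.mp this
      first
      | linarith [h2.1]
      | linarith [h2.2]
  have := oneDim_const_step Hc ht₀ hs'
  have hz' : c + δ₁ + m * (s + δ₂/m) = z := by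
    have hδsum : δ₁ + m * (δ₂/m) = δ := by
      rw [hδ₁, hδ₂]
      field_simp
      ring
    calc c + δ₁ + m*(s+δ₂/m) = c + m*s + (δ₁ + m*(δ₂/m)) := by ring
      _ = c + m*s + δ := by rw [hδsum]
      _ = z := by rw [hδ]; ring
  rw [← hm] at this
  rwa [hz'] at this



lemma oneDim_mixed (hopen : IsOpen T)
    (Hc : ∀ t₀ ∈ T, ∀ s : Fin (k+1) → ℝ, (∀ j, s j ∈ T) → t₀ + ∑ j, s j ∈ T)
    {p q : ℝ} (hp : p ∈ T) (hq : q ∈ T) (hq0 : q < 0) (hp0 : 0 < p) : T = Set.univ := by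
  set m : ℝ := (k+1 : ℝ) with hm
  have hm0 : (0:ℝ) < m := by positivity
  obtain ⟨ηp, hηp, hballp⟩ := Metric.isOpen_iff.mp hopen p hp
  obtain ⟨ηq, hηq, hballq⟩ := Metric.isOpen_iff.mp hopen q hq
  set η : ℝ := min ηp ηq with hη
  have hη0 : 0 < η := lt_min hηp hηq
  have hIp : Ioo (p - η) (p + η) ⊆ T := by
    refine subset_trans ?_ hballp
    rw [Real.ball_eq_Ioo]
    exact Ioo_subset_Ioo (by simp [hη]; linarith [min_le_left ηp ηq]) (by linarith [min_le_left ηp ηq])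
  have hIq : Ioo (q - η) (q + η) ⊆ T := by
    refine subset_trans ?_ hballq
    rw [Real.ball_eq_Ioo]
    exact Ioo_subset_Ioo (by linarith [min_le_right ηp ηq]) (by linarith [min_le_right ηp ηq])
  -- iterated intervals
  have key : ∀ i : ℕ, ∀ j : ℕ,
      Ioo (p + m*((i:ℝ)*p + (j:ℝ)*q) - (η + (↑i + ↑j)*(m*η)))
          (p + m*((i:ℝ)*p + (j:ℝ)*q) + (η + (↑i + ↑j)*(m*η))) ⊆ T := by
    intro i
    induction i with
    | zero =>
      intro j
      induction j with
      | zero => simpa using hIp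
      | succ j ihj =>
        have := oneDim_interval_step Hc (by positivity) hη0 ihj hIq
        refine subset_trans (Set.Subset.refl _) ?_
        convert this using 2 <;> first | rfl | (push_cast; rw [hm]; ring)
    | succ i ihi =>
      intro j
      have := oneDim_interval_step Hc (by positivity) hη0 (ihi j) hIp
      refine subset_trans (Set.Subset.refl _) ?_
      convert this using 2 <;> first | rfl | (push_cast; rw [hm]; ring)
  ext x
  simp only [Set.mem_univ, iff_true]
  set M : ℝ := |x| + |p| + m * (-q) with hM
  obtain ⟨i, hi⟩ := exists_nat_gt (M / (η * m))
  have hi' : M < (i:ℝ) * (η * m) := by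
    rw [div_lt_iff₀ (by positivity)] at hi
    linarith
  set j : ℕ := ⌈(i:ℝ)*p/(-q)⌉₊ with hj
  have hq0' : (0:ℝ) < -q := by linarith
  have hjq : (0:ℝ) ≤ (i:ℝ)*p/(-q) := div_nonneg (by positivity) hq0'.le
  have hj1 : (i:ℝ)*p/(-q) ≤ (j:ℝ) := Nat.le_ceil _
  have hj2 : (j:ℝ) < (i:ℝ)*p/(-q) + 1 := Nat.ceil_lt_add_one hjq
  have hS1 : (i:ℝ)*p + (j:ℝ)*q ≤ 0 := by
    rw [div_le_iff₀ (by linarith : (0:ℝ) < -q)] at hj1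
    nlinarith
  have hS2 : q < (i:ℝ)*p + (j:ℝ)*q := by
    have h2' := mul_lt_mul_of_pos_right hj2 hq0'
    have he : ((i:ℝ)*p/(-q) + 1)*(-q) = (i:ℝ)*p + (-q) := by
      rw [add_mul, div_mul_cancel₀ _ (by linarith : -q ≠ 0), one_mul]
    rw [he] at h2'
    nlinarith
  have hmS1 : m*((i:ℝ)*p+(j:ℝ)*q) ≤ 0 := mul_nonpos_of_nonneg_of_nonpos hm0.le hS1
  have hmS2 : m*q < m*((i:ℝ)*p+(j:ℝ)*q) := mul_lt_mul_of_pos_left hS2 hm0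
  have hmq : m*q < 0 := mul_neg_of_pos_of_neg hm0 hq0
  have hrad : (i:ℝ)*(η*m) ≤ η + ((i:ℝ)+(j:ℝ))*(m*η) := by
    nlinarith [mul_nonneg (Nat.cast_nonneg j : (0:ℝ) ≤ (j:ℝ)) (mul_nonneg hm0.le hη0.le), hη0]
  refine key i j ⟨?_, ?_⟩
  · have h1 := le_abs_self x
    have h2 := neg_abs_le x
    have h3 := le_abs_self p
    have h4 := neg_abs_le p
    simp only [hM] at hi'
    linarith
  · have h1 := le_abs_self x
    have h2 := neg_abs_le x
    have h3 := le_abs_self p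
    have h4 := neg_abs_le p
    simp only [hM] at hi'
    linarith

lemma oneDim_pos (hopen : IsOpen T)
    (Hc : ∀ t₀ ∈ T, ∀ s : Fin (k+1) → ℝ, (∀ j, s j ∈ T) → t₀ + ∑ j, s j ∈ T)
    (Hd : ∀ t ∈ T, ∃ s : Fin (k+1) → ℝ, (∀ j, s j ∈ T) ∧ t - ∑ j, s j ∈ T)
    (hpos : ∀ t ∈ T, 0 < t) {t₁ : ℝ} (ht₁ : t₁ ∈ T) : T = Set.Ioi 0 := by
  set m : ℝ := (k+1 : ℝ) with hm
  have hm0 : (0:ℝ) < m := by positivity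
  -- arbitrarily small elements
  have small : ∀ ε : ℝ, 0 < ε → ∃ t ∈ T, t < ε := by
    intro ε hε
    by_contra hcon
    push_neg at hcon
    have grow : ∀ n : ℕ, ∀ t ∈ T, (n:ℝ) * ε ≤ t := by
      intro n
      induction n with
      | zero => intro t ht; simpa using (hpos t ht).le
      | succ n ih =>
        intro t ht
        obtain ⟨s, hsT, hrem⟩ := Hd t ht
        have h1 : (n:ℝ) * ε ≤ t - ∑ j, s j := ih _ hrem
        have h2 : ε ≤ ∑ j, s j := by
          calc ε = ∑ _j : Fin (k+1), (ε / (k+1):ℝ) := by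
                rw [Finset.sum_const]
                simp [nsmul_eq_mul]
                field_simp
            _ ≤ ∑ j, s j := by
                refine Finset.sum_le_sum fun j _ => ?_
                have := hcon (s j) (hsT j)
                have hd : ε / (k+1:ℝ) ≤ ε := by
                  rw [div_le_iff₀ (by positivity)]
                  nlinarith
                linarith
        push_cast
        linarith
    obtain ⟨n, hn⟩ := exists_nat_gt (t₁ / ε)
    have := grow n t₁ ht₁
    rw [div_lt_iff₀ hε] at hn
    linarith
  -- ladder
  have ladder : ∀ t ∈ T, ∀ N : ℕ, t + (N:ℝ) * (m * t) ∈ T := by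
    intro t ht N
    induction N with
    | zero => simpa using ht
    | succ N ih =>
      have := oneDim_const_step Hc ih ht
      rw [← hm] at this
      convert this using 1
      push_cast
      ring
  -- density
  have dense : ∀ y ε : ℝ, 0 < y → 0 < ε → ∃ t₀ ∈ T, y ≤ t₀ ∧ t₀ < y + ε := by
    intro y ε hy hε
    obtain ⟨t, htT, htlt⟩ := small (min y (ε / m)) (by positivity)
    have ht0 : 0 < t := hpos t htT
    have hty : t < y := lt_of_lt_of_le htlt (min_le_left _ _)
    have htε : m * t < ε := by
      have := lt_of_lt_of_le htlt (min_le_right _ _)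
      rw [lt_div_iff₀ hm0] at this
      linarith [this]
    set N : ℕ := ⌈(y - t)/(m*t)⌉₊ with hN
    refine ⟨t + (N:ℝ)*(m*t), ladder t htT N, ?_, ?_⟩
    · have h1 : (y-t)/(m*t) ≤ (N:ℝ) := Nat.le_ceil _
      rw [div_le_iff₀ (by positivity)] at h1
      linarith
    · have h2 : (N:ℝ) < (y-t)/(m*t) + 1 :=
        Nat.ceil_lt_add_one (div_nonneg (by linarith) (by positivity))
      have hmt0 : (0:ℝ) < m*t := by positivity
      nlinarith [mul_lt_mul_of_pos_right h2 hmt0, div_mul_cancel₀ (y-t) (ne_of_gt hmt0)]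
  -- conclusion
  ext x
  simp only [Set.mem_Ioi]
  constructor
  · exact hpos x
  · intro hx
    obtain ⟨t, htT, htlt⟩ := small (x / (2*m)) (by positivity)
    have ht0 : 0 < t := hpos t htT
    have hmt : m * t < x / 2 := by
      rw [lt_div_iff₀ (by positivity : (0:ℝ) < 2*m)] at htlt
      nlinarith
    obtain ⟨η₀, hη₀, hball⟩ := Metric.isOpen_iff.mp hopen t htT
    set η : ℝ := min η₀ t with hη
    have hη0 : 0 < η := lt_min hη₀ ht0
    have hηt : η ≤ t := min_le_right _ _
    have hIt : Ioo (t - η) (t + η) ⊆ T := by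
      refine subset_trans ?_ hball
      rw [Real.ball_eq_Ioo]
      exact Ioo_subset_Ioo (by linarith [min_le_left η₀ t]) (by linarith [min_le_left η₀ t])
    have hy0 : 0 < x - m*t := by nlinarith [hmt, hx]
    obtain ⟨t₀, ht₀T, ht₀1, ht₀2⟩ := dense (x - m*t) (m*η) hy0 (by positivity)
    set s' : ℝ := (x - t₀)/m with hs'
    have hs'mem : s' ∈ T := by
      refine hIt ⟨?_, ?_⟩
      · rw [hs', lt_div_iff₀ hm0]
        nlinarith
      · rw [hs', div_lt_iff₀ hm0]
        nlinarith
    have := oneDim_const_step Hc ht₀T hs'mem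
    rw [← hm] at this
    have hxeq : t₀ + m * s' = x := by
      rw [hs']
      field_simp
      ring
    rwa [hxeq] at this

lemma oneDim (hopen : IsOpen T)
    (Hc : ∀ t₀ ∈ T, ∀ s : Fin (k+1) → ℝ, (∀ j, s j ∈ T) → t₀ + ∑ j, s j ∈ T)
    (Hd : ∀ t ∈ T, ∃ s : Fin (k+1) → ℝ, (∀ j, s j ∈ T) ∧ t - ∑ j, s j ∈ T) :
    IsPreconnected T := by
  rcases Set.eq_empty_or_nonempty T with hT | ⟨t₁, ht₁⟩
  · rw [hT]; exact isPreconnected_empty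
  by_cases h0 : (0:ℝ) ∈ T
  · obtain ⟨η, hη, hball⟩ := Metric.isOpen_iff.mp hopen 0 h0
    have hp : η/2 ∈ T := hball (by simp [Real.ball_eq_Ioo]; constructor <;> linarith)
    have hq : -(η/2) ∈ T := hball (by simp [Real.ball_eq_Ioo]; constructor <;> linarith)
    rw [oneDim_mixed hopen Hc hp hq (by linarith) (by linarith)]
    exact isPreconnected_univ
  by_cases hP : ∃ p ∈ T, 0 < p
  · obtain ⟨p, hpT, hp0⟩ := hP
    by_cases hQ : ∃ q ∈ T, q < 0
    · obtain ⟨q, hqT, hq0⟩ := hQ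
      rw [oneDim_mixed hopen Hc hpT hqT hq0 hp0]
      exact isPreconnected_univ
    · push_neg at hQ
      have hpos : ∀ t ∈ T, 0 < t := by
        intro t ht
        rcases lt_trichotomy t 0 with h | h | h
        · exact absurd h (not_lt.mpr (hQ t ht))
        · exact absurd (h ▸ ht) h0
        · exact h
      rw [oneDim_pos hopen Hc Hd hpos ht₁]
      exact isPreconnected_Ioi
  · push_neg at hP
    have hneg : ∀ t ∈ T, t < 0 := by
      intro t ht
      rcases lt_trichotomy t 0 with h | h | h
      · exact h
      · exact absurd (h ▸ ht) h0
      · exact absurd h (not_lt.mpr (hP t ht))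
    -- apply positive case to -T
    have hopen' : IsOpen (-T) := hopen.neg
    have Hc' : ∀ t₀ ∈ (-T), ∀ s : Fin (k+1) → ℝ, (∀ j, s j ∈ (-T)) → t₀ + ∑ j, s j ∈ (-T) := by
      intro t₀ ht₀ s hs
      have : (-t₀) + ∑ j, (-(s j)) ∈ T := Hc (-t₀) ht₀ (fun j => -(s j)) fun j => hs j
      simp only [Set.mem_neg]
      convert this using 1
      rw [Finset.sum_neg_distrib]
      ring
    have Hd' : ∀ t ∈ (-T), ∃ s : Fin (k+1) → ℝ, (∀ j, s j ∈ (-T)) ∧ t - ∑ j, s j ∈ (-T) := by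
      intro t ht
      obtain ⟨s, hsT, hrem⟩ := Hd (-t) ht
      refine ⟨fun j => -(s j), fun j => by simpa using hsT j, ?_⟩
      simp only [Set.mem_neg]
      convert hrem using 1
      rw [Finset.sum_neg_distrib]
      ring
    have hpos' : ∀ t ∈ (-T), 0 < t := by
      intro t ht
      have := hneg (-t) ht
      linarith
    have ht₁' : -t₁ ∈ (-T) := by simpa using ht₁
    have : (-T) = Set.Ioi 0 := oneDim_pos hopen' Hc' Hd' hpos' ht₁'
    have hTeq : T = Set.Iio 0 := by
      ext x
      constructor
      · intro hx; exact hneg x hx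
      · intro hx
        have : -x ∈ (-T) := by rw [this]; simpa using hx
        simpa using this
    rw [hTeq]
    exact isPreconnected_Iio

end OneDim

lemma euc_cons_continuous {κ : ℕ} (a : ℝ) :
    Continuous (fun y : Euc κ => (show Euc (κ+1) from WithLp.toLp 2 (Fin.cons a (fun j => y j) : Fin (κ+1) → ℝ))) := by
  have h1 : Continuous (fun y : Fin κ → ℝ => (Fin.cons a y : Fin (κ+1) → ℝ)) := by
    refine continuous_pi fun i => ?_
    refine Fin.cases ?_ ?_ i
    · simpa [Fin.cons_zero] using continuous_const
    · intro j
      simpa [Fin.cons_succ] using continuous_apply j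
  exact (PiLp.continuous_toLp 2 _).comp (h1.comp (PiLp.continuous_ofLp 2 _))

lemma euc_axis_continuous {κ : ℕ} :
    Continuous (fun t : ℝ => (show Euc (κ+1) from WithLp.toLp 2 (Fin.cons t (fun _ => 0) : Fin (κ+1) → ℝ))) := by
  have h1 : Continuous (fun t : ℝ => (Fin.cons t (fun _ => 0) : Fin (κ+1) → ℝ)) := by
    refine continuous_pi fun i => ?_
    refine Fin.cases ?_ ?_ i
    · simpa [Fin.cons_zero] using continuous_id'
    · intro j
      simpa [Fin.cons_succ] using continuous_const
  exact (PiLp.continuous_toLp 2 _).comp h1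

lemma euc_sum_apply {N n : ℕ} (y : Fin N → Euc n) (i : Fin n) :
    (∑ j, y j) i = ∑ j, (y j) i := by
  have := map_sum (PiLp.proj (𝕜 := ℝ) 2 (fun _ : Fin n => ℝ) i) y Finset.univ
  rw [PiLp.proj_apply] at this
  simp only [PiLp.proj_apply] at this
  exact this

lemma conv_pos_char (d k : ℕ) (f : Euc (d + 2) → ℝ) (hfc : Continuous f) (hf0 : ∀ x, 0 ≤ f x)
    (h : Euc (d + 2) → ℝ) (hh0 : ∀ x, 0 < h x)
    (hconv : ∀ x : Euc (d + 2), Integrable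
      (fun y : Fin (k + 1) → Euc (d + 2) =>
        f (x - ∑ j : Fin (k + 1), y j) * ∏ j : Fin (k + 1), f (y j)) volume)
    (heq : ∀ x : Euc (d + 2), f x = h x *
      ∫ y : Fin (k + 1) → Euc (d + 2),
        f (x - ∑ j : Fin (k + 1), y j) * ∏ j : Fin (k + 1), f (y j))
    (x : Euc (d + 2)) :
    0 < f x ↔ ∃ y : Fin (k+1) → Euc (d+2),
      0 < f (x - ∑ j, y j) ∧ ∀ j, 0 < f (y j) := by
  set F : (Fin (k+1) → Euc (d+2)) → ℝ :=
    fun y => f (x - ∑ j, y j) * ∏ j, f (y j) with hF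
  have hF0 : 0 ≤ F := fun y => mul_nonneg (hf0 _) (Finset.prod_nonneg fun j _ => hf0 _)
  have hFc : Continuous F := by
    refine Continuous.mul ?_ ?_
    · exact hfc.comp (continuous_const.sub (continuous_finset_sum _ fun j _ => continuous_apply j))
    · exact continuous_finset_prod _ fun j _ => hfc.comp (continuous_apply j)
  have hiff := integral_pos_iff_support_of_nonneg hF0 (hconv x)
  constructor
  · intro hx
    have hI : 0 < ∫ y, F y := by
      have := heq x
      nlinarith [hh0 x]
    obtain ⟨y, hy⟩ := nonempty_of_measure_ne_zero (ne_of_gt (hiff.mp hI))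
    have hFy : 0 < F y := lt_of_le_of_ne (hF0 y) (Ne.symm hy)
    have h1 : 0 < f (x - ∑ j, y j) := by
      rcases mul_pos_iff.mp hFy with ⟨h1, _⟩ | ⟨h1, _⟩
      · exact h1
      · exact absurd h1 (not_lt.mpr (hf0 _))
    have h2 : ∀ j, 0 < f (y j) := by
      intro j
      have hprod : 0 < ∏ j, f (y j) := by
        rcases mul_pos_iff.mp hFy with ⟨_, h2⟩ | ⟨_, h2⟩
        · exact h2
        · exact absurd h2 (not_lt.mpr (Finset.prod_nonneg fun j _ => hf0 _))
      by_contra hne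
      have : f (y j) = 0 := le_antisymm (not_lt.mp hne) (hf0 _)
      rw [Finset.prod_eq_zero (Finset.mem_univ j) this] at hprod
      exact lt_irrefl 0 hprod
    exact ⟨y, h1, h2⟩
  · rintro ⟨y, h1, h2⟩
    have hFy : 0 < F y := mul_pos h1 (Finset.prod_pos fun j _ => h2 j)
    have hV : 0 < volume (Function.support F) := by
      have hsub : {z | 0 < F z} ⊆ Function.support F := fun z hz => ne_of_gt hz
      have hopen : IsOpen {z | 0 < F z} := isOpen_lt continuous_const hFc
      exact lt_of_lt_of_le (hopen.measure_pos volume ⟨y, hFy⟩) (measure_mono hsub)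
    have hI : 0 < ∫ y, F y := hiff.mpr hV
    rw [heq x]
    exact mul_pos (hh0 x) hI


theorem statement17 (d k : ℕ) (e : Euc (d + 2)) (he : ‖e‖ = 1)
    (R : Euc (d + 2) ≃ₗᵢ[ℝ] Euc (d + 2))
    (hR : R e = EuclideanSpace.single (0 : Fin (d + 2)) (1 : ℝ))
    (f : Euc (d + 2) → ℝ) (hfc : Continuous f) (hf0 : ∀ x, 0 ≤ f x)
    (hfLp : MemLp f (ENNReal.ofReal ((k + 2 : ℝ) / (k + 1 : ℝ))) volume)
    (hfe : ∀ x, f x = steinerE R f x)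
    (h : Euc (d + 2) → ℝ) (hhc : Continuous h) (hh0 : ∀ x, 0 < h x)
    (hconv : ∀ x : Euc (d + 2), Integrable
      (fun y : Fin (k + 1) → Euc (d + 2) =>
        f (x - ∑ j : Fin (k + 1), y j) * ∏ j : Fin (k + 1), f (y j)) volume)
    (heq : ∀ x : Euc (d + 2), f x = h x *
      ∫ y : Fin (k + 1) → Euc (d + 2),
        f (x - ∑ j : Fin (k + 1), y j) * ∏ j : Fin (k + 1), f (y j)) :
    IsPreconnected {x : Euc (d + 2) | 0 < f x} := by
  classical
  set v : Euc (d + 2) → ℝ := fun x => f (R.symm x) with hv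
  have hvc : Continuous v := hfc.comp R.symm.continuous
  -- v is a fixed point of steiner1
  have hvst : ∀ w : Euc (d + 2), v w = steiner1 v w := by
    intro w
    have := hfe (R.symm w)
    rw [steinerE] at this
    rw [hv]
    simpa [LinearIsometryEquiv.apply_symm_apply] using this
  -- positivity characterization for v
  have hmap : ∀ (x : Euc (d+2)) (y : Fin (k+1) → Euc (d+2)),
      R.symm (x - ∑ j, y j) = R.symm x - ∑ j, R.symm (y j) := by
    intro x y
    rw [map_sub, map_sum]
  have Pv : ∀ x : Euc (d+2), 0 < v x ↔ ∃ y : Fin (k+1) → Euc (d+2),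
      0 < v (x - ∑ j, y j) ∧ ∀ j, 0 < v (y j) := by
    intro x
    have base := conv_pos_char d k f hfc hf0 h hh0 hconv heq (R.symm x)
    constructor
    · intro hx
      obtain ⟨y, h1, h2⟩ := base.mp hx
      refine ⟨fun j => R (y j), ?_, fun j => ?_⟩
      · rw [hv]
        simp only
        rw [hmap]
        simpa [LinearIsometryEquiv.symm_apply_apply] using h1
      · rw [hv]
        simpa [LinearIsometryEquiv.symm_apply_apply] using h2 j
    · rintro ⟨y, h1, h2⟩
      refine base.mpr ⟨fun j => R.symm (y j), ?_, fun j => h2 j⟩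
      have h1' : 0 < f (R.symm (x - ∑ j, y j)) := h1
      rw [hmap] at h1'
      simpa using h1'
  -- Claim A: star-shapedness of slices
  have claimA : ∀ x : Euc (d+2), 0 < v x → ∀ c ∈ Set.Icc (0:ℝ) 1,
      0 < v (show Euc (d+2) from WithLp.toLp 2 (Fin.cons (x 0) (fun j => (c • (WithLp.toLp 2 (Fin.tail (WithLp.ofLp x)) : Euc (d+1))) j) : Fin (d+2) → ℝ)) := by
    intro x hx c hc
    set t₀ : ℝ := x 0 with ht₀
    set g : Euc (d+1) → ℝ := fun y => v (show Euc (d+2) from WithLp.toLp 2 (Fin.cons t₀ (fun j => y j) : Fin (d+2) → ℝ)) with hg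
    have hgc : Continuous g := hvc.comp (euc_cons_continuous t₀)
    have hid : ∀ y : Euc (d+1), g y = symmRearr g y := by
      intro y
      have h1 := hvst (show Euc (d+2) from WithLp.toLp 2 (Fin.cons t₀ (fun j => y j) : Fin (d+2) → ℝ))
      rw [steiner1] at h1
      exact h1
    have hxg : 0 < g (WithLp.toLp 2 (Fin.tail (WithLp.ofLp x)) : Euc (d+1)) := by
      have : (show Euc (d+2) from WithLp.toLp 2 (Fin.cons t₀ (fun j => (WithLp.toLp 2 (Fin.tail (WithLp.ofLp x)) : Euc (d+1)) j) : Fin (d+2) → ℝ)) = x :=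
        congrArg (WithLp.toLp 2) (Fin.cons_self_tail (WithLp.ofLp x))
      rw [hg]
      simpa [this] using hx
    exact symm_fixed_pos g hgc hid (WithLp.toLp 2 (Fin.tail (WithLp.ofLp x)) : Euc (d+1)) hxg c hc
  -- axis map
  set p : ℝ → Euc (d+2) := fun t => (show Euc (d+2) from WithLp.toLp 2 (Fin.cons t (fun _ => 0) : Fin (d+2) → ℝ)) with hp
  have hpc : Continuous p := euc_axis_continuous
  -- Claim B
  have claimB : ∀ x : Euc (d+2), 0 < v x → 0 < v (p (x 0)) := by
    intro x hx
    have := claimA x hx 0 ⟨le_refl 0, zero_le_one⟩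
    have hzero : (fun j => ((0:ℝ) • (WithLp.toLp 2 (Fin.tail (WithLp.ofLp x)) : Euc (d+1))) j) = (fun _ => 0 : Fin (d+1) → ℝ) := by
      funext j
      simp [PiLp.smul_apply]
    rw [hzero] at this
    exact this
  set T : Set ℝ := {t | 0 < v (p t)} with hT
  have hTopen : IsOpen T := isOpen_lt continuous_const (hvc.comp hpc)
  -- coordinates of axis points
  have hp0 : ∀ t : ℝ, p t 0 = t := fun t => rfl
  have hpsucc : ∀ (t : ℝ) (j : Fin (d+1)), p t j.succ = 0 := fun t j => Fin.cons_succ (α := fun _ => ℝ) t (fun _ => (0:ℝ)) j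
  have Hc : ∀ t₀ ∈ T, ∀ s : Fin (k+1) → ℝ, (∀ j, s j ∈ T) → t₀ + ∑ j, s j ∈ T := by
    intro t₀ ht₀ s hs
    have key : p (t₀ + ∑ j, s j) - ∑ j, p (s j) = p t₀ := by
      ext i
      rw [PiLp.sub_apply, euc_sum_apply]
      refine Fin.cases ?_ ?_ i
      · simp only [hp0]
        ring
      · intro j
        simp only [hpsucc]
        simp
    refine (Pv (p (t₀ + ∑ j, s j))).mpr ⟨fun j => p (s j), ?_, fun j => hs j⟩
    rw [key]
    exact ht₀
  have Hd : ∀ t ∈ T, ∃ s : Fin (k+1) → ℝ, (∀ j, s j ∈ T) ∧ t - ∑ j, s j ∈ T := by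
    intro t ht
    obtain ⟨y, h1, h2⟩ := (Pv (p t)).mp ht
    refine ⟨fun j => y j 0, fun j => claimB _ (h2 j), ?_⟩
    have : (p t - ∑ j, y j) 0 = t - ∑ j, y j 0 := by
      rw [PiLp.sub_apply, euc_sum_apply, hp0]
    have hmem := claimB _ h1
    rwa [this] at hmem
  have hTpre : IsPreconnected T := oneDim hTopen Hc Hd
  -- the positivity set of v
  set S : Set (Euc (d+2)) := {x | 0 < v x} with hS
  have haxis_sub : p '' T ⊆ S := by
    rintro _ ⟨t, ht, rfl⟩
    exact ht
  have haxis_pre : IsPreconnected (p '' T) := hTpre.image p hpc.continuousOn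
  have hseg_sub : ∀ x ∈ S, segment ℝ (p (x 0)) x ⊆ S := by
    intro x hx z hz
    rw [segment_eq_image] at hz
    obtain ⟨c, hc, rfl⟩ := hz
    have hrepr : (1 - c) • p (x 0) + c • x
        = (show Euc (d+2) from WithLp.toLp 2 (Fin.cons (x 0) (fun j => (c • (WithLp.toLp 2 (Fin.tail (WithLp.ofLp x)) : Euc (d+1))) j) : Fin (d+2) → ℝ)) := by
      ext i
      rw [PiLp.add_apply, PiLp.smul_apply, PiLp.smul_apply]
      refine Fin.cases ?_ ?_ i
      · simp only [hp0, Fin.cons_zero, smul_eq_mul]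
        ring
      · intro j
        simp only [hpsucc, Fin.cons_succ, smul_eq_mul, PiLp.smul_apply]
        show (1 - c) * 0 + c * x j.succ = c * (Fin.tail x j)
        rw [Fin.tail]
        ring
    show 0 < v ((1 - c) • p (x 0) + c • x)
    rw [hrepr]
    exact claimA x hx c hc
  have hSpre : IsPreconnected S := by
    rcases Set.eq_empty_or_nonempty S with hSe | ⟨x₁, hx₁⟩
    · rw [hSe]; exact isPreconnected_empty
    have hx₁T : x₁ 0 ∈ T := claimB x₁ hx₁
    have hunion : ⋃₀ ((fun x => segment ℝ (p (x 0)) x ∪ p '' T) '' S) = S := by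
      ext z
      constructor
      · rintro ⟨s, ⟨x, hxS, rfl⟩, hz⟩
        rcases hz with hz | hz
        · exact hseg_sub x hxS hz
        · exact haxis_sub hz
      · intro hz
        exact ⟨_, ⟨z, hz, rfl⟩, Or.inl (right_mem_segment ℝ _ _)⟩
    rw [← hunion]
    refine isPreconnected_sUnion (p (x₁ 0)) _ ?_ ?_
    · rintro s ⟨x, hxS, rfl⟩
      exact Or.inr ⟨x₁ 0, hx₁T, rfl⟩
    · rintro s ⟨x, hxS, rfl⟩
      refine IsPreconnected.union (p (x 0)) ?_ ?_ ?_ haxis_pre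
      · exact left_mem_segment ℝ _ _
      · exact ⟨x 0, claimB x hxS, rfl⟩
      · exact (convex_segment _ _).isPreconnected
  -- transfer back to f
  have hfinal : {x : Euc (d+2) | 0 < f x} = R.symm '' S := by
    ext x
    constructor
    · intro hx
      refine ⟨R x, ?_, R.symm_apply_apply x⟩
      show 0 < v (R x)
      rw [hv]
      simpa [LinearIsometryEquiv.symm_apply_apply] using hx
    · rintro ⟨y, hy, rfl⟩
      exact hy
  rw [hfinal]
  exact hSpre.image _ R.symm.continuous.continuousOn


end
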